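/- Let n ≥ 1 be an integer and let 0 < a < b. Then there exist a constant c > 0 and h₀ ∈ (0, 1], depending only on n, a and b, such that for every h ∈ (0, h₀], ∑ d_{ℓ,ℓ'} ≥ c · h^{−(2n+2)}, where the sum ranges over all pairs (ℓ, ℓ') ∈ ℕ² with a/h² < λ_{ℓ,ℓ'} < b/h². -/
import Mathlib


/-- The dimension `d_{ℓ,ℓ'}` of the space `𝓗^{ℓ,ℓ'}` of complex spherical harmonics of
bidegree `(ℓ,ℓ')` on `S^{2n+1}`. -/
noncomputable def harmDim (n ℓ ℓ' : ℕ) : ℝ :=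
  if ℓ = 0 then (Nat.choose (ℓ' + n) ℓ' : ℝ)
  else if ℓ' = 0 then (Nat.choose (ℓ + n) ℓ : ℝ)
  else (n : ℝ) * (((ℓ : ℝ) + ℓ' + n) / ((ℓ : ℝ) * ℓ')) *
    (Nat.choose (ℓ + n - 1) (ℓ - 1) : ℝ) * (Nat.choose (ℓ' + n - 1) (ℓ' - 1) : ℝ)

lemma harmDim_nonneg (n ℓ ℓ' : ℕ) : 0 ≤ harmDim n ℓ ℓ' := by
  unfold harmDim
  split_ifs with h1 h2
  · positivity
  · positivity
  · positivity

lemma choose_lb (n ℓ : ℕ) (hℓ : 1 ≤ ℓ) :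
    (ℓ : ℝ) ^ n ≤ (n.factorial : ℝ) * (Nat.choose (ℓ + n - 1) (ℓ - 1) : ℝ) := by
  have hsym : Nat.choose (ℓ + n - 1) (ℓ - 1) = Nat.choose (ℓ + n - 1) n := by
    have h1 : n ≤ ℓ + n - 1 := by omega
    have h2 : ℓ + n - 1 - n = ℓ - 1 := by omega
    rw [← h2, Nat.choose_symm h1]
  rw [hsym]
  have key : ℓ ^ n ≤ n.factorial * Nat.choose (ℓ + n - 1) n := by
    calc ℓ ^ n ≤ ℓ.ascFactorial n := Nat.pow_succ_le_ascFactorial ℓ n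
    _ = n.factorial * Nat.choose (ℓ + n - 1) n := Nat.ascFactorial_eq_factorial_mul_choose' ℓ n
  exact_mod_cast key

lemma harmDim_one_lb (n ℓ : ℕ) (hn : 1 ≤ n) (hℓ : 1 ≤ ℓ) :
    (n : ℝ) / (n.factorial : ℝ) * (ℓ : ℝ) ^ n ≤ harmDim n ℓ 1 := by
  have hℓ0 : ℓ ≠ 0 := by omega
  have hℓR : (0:ℝ) < (ℓ:ℝ) := by exact_mod_cast hℓ
  unfold harmDim
  rw [if_neg hℓ0, if_neg one_ne_zero]
  have hC0 : Nat.choose (1 + n - 1) (1 - 1) = 1 := by simp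
  rw [hC0]
  push_cast
  have hfrac : (1:ℝ) ≤ ((ℓ : ℝ) + 1 + n) / ((ℓ : ℝ) * 1) := by
    rw [mul_one, le_div_iff₀ hℓR, one_mul]
    have : (0:ℝ) ≤ 1 + (n:ℝ) := by positivity
    linarith
  have hC := choose_lb n ℓ hℓ
  have hfac : (0:ℝ) < (n.factorial : ℝ) := by exact_mod_cast n.factorial_pos
  have hCge : (ℓ:ℝ)^n / (n.factorial:ℝ) ≤ (Nat.choose (ℓ + n - 1) (ℓ - 1) : ℝ) := by
    rw [div_le_iff₀ hfac]
    linarith [hC]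
  have hn0 : (0:ℝ) < (n:ℝ) := by exact_mod_cast hn
  calc (n : ℝ) / (n.factorial : ℝ) * (ℓ : ℝ) ^ n
      = (n:ℝ) * 1 * ((ℓ:ℝ)^n / (n.factorial:ℝ)) * 1 := by ring
    _ ≤ (n:ℝ) * (((ℓ : ℝ) + 1 + n) / ((ℓ : ℝ) * 1)) * (Nat.choose (ℓ + n - 1) (ℓ - 1) : ℝ) * 1 := by
        have h1 : (0:ℝ) ≤ (ℓ:ℝ)^n / (n.factorial:ℝ) := by positivity
        have h2 : (0:ℝ) ≤ (Nat.choose (ℓ + n - 1) (ℓ - 1) : ℝ) := by positivity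
        have := mul_le_mul hfrac hCge h1 (by positivity : (0:ℝ) ≤ ((ℓ : ℝ) + 1 + n) / ((ℓ : ℝ) * 1))
        nlinarith


/-- For `n ≥ 1` and `0 < a < b`, there are `c > 0` and `h₀ ∈ (0,1]` such that for all
`h ∈ (0, h₀]`, the total dimension of the eigenspaces with `a/h² < λ_{ℓ,ℓ'} < b/h²` is at
least `c·h^{−(2n+2)}`, where `λ_{ℓ,ℓ'} = 2ℓℓ' + n(ℓ+ℓ')`. -/
theorem dim_localized_lower (n : ℕ) (hn : 1 ≤ n) (a b : ℝ) (ha : 0 < a) (hab : a < b) :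
    ∃ c : ℝ, 0 < c ∧ ∃ h₀ : ℝ, h₀ ∈ Set.Ioc (0 : ℝ) 1 ∧ ∀ h : ℝ, h ∈ Set.Ioc (0 : ℝ) h₀ →
      c / h ^ (2 * n + 2)
      ≤ ∑ p ∈ (Finset.range (⌊b / h ^ 2⌋₊ + 1) ×ˢ Finset.range (⌊b / h ^ 2⌋₊ + 1)).filter
          (fun p => a / h ^ 2 < ((2 * p.1 * p.2 + n * (p.1 + p.2) : ℕ) : ℝ) ∧
            ((2 * p.1 * p.2 + n * (p.1 + p.2) : ℕ) : ℝ) < b / h ^ 2),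
        harmDim n p.1 p.2 := by
  have hba : (0:ℝ) < b - a := by linarith
  have hb : (0:ℝ) < b := by linarith
  set D : ℝ := (n:ℝ) + 2 with hDdef
  have hDpos : (0:ℝ) < D := by positivity
  have hnfac : (0:ℝ) < (n.factorial : ℝ) := by exact_mod_cast n.factorial_pos
  have hnR : (0:ℝ) < (n:ℝ) := by exact_mod_cast hn
  set c : ℝ := (b-a)/(4*D) * ((n:ℝ)/(n.factorial:ℝ)) * (a/D)^n with hcdef
  have hc : 0 < c := by
    apply mul_pos (mul_pos (div_pos hba (by positivity)) (div_pos hnR hnfac))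
    exact pow_pos (div_pos ha hDpos) n
  refine ⟨c, hc, ?_⟩
  set X : ℝ := max (max (4*D/(b-a)) (2*(D+(n:ℝ)+1)/(b-a))) (1/b) with hXdef
  have hXpos : 0 < X := lt_of_lt_of_le (by positivity) (le_max_right _ _)
  refine ⟨min 1 (1/Real.sqrt X), ⟨?_, min_le_left _ _⟩, ?_⟩
  · exact lt_min one_pos (by positivity)
  intro h ⟨hh0, hh1⟩
  have hhsq : (0:ℝ) < h^2 := by positivity
  -- x = 1/h²
  set x : ℝ := 1 / h^2 with hxdef
  have hxpos : 0 < x := by positivity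
  have hXx : X ≤ x := by
    have h1 : h ≤ 1/Real.sqrt X := le_trans hh1 (min_le_right _ _)
    have hsX : 0 < Real.sqrt X := Real.sqrt_pos.mpr hXpos
    have h2 : h^2 ≤ (1/Real.sqrt X)^2 := by
      apply pow_le_pow_left₀ hh0.le h1
    have h3 : (1/Real.sqrt X)^2 = 1/X := by
      rw [div_pow, one_pow, Real.sq_sqrt hXpos.le]
    rw [h3] at h2
    rw [hxdef, le_div_iff₀ hhsq]
    calc X * h^2 ≤ X * (1/X) := by
          exact mul_le_mul_of_nonneg_left h2 hXpos.le
      _ = 1 := by field_simp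
  have hx1 : 4*D ≤ (b-a)*x := by
    have : 4*D/(b-a) ≤ x := le_trans (le_trans (le_max_left _ _) (le_max_left _ _)) hXx
    rw [div_le_iff₀ hba] at this; linarith
  have hx2 : 2*(D+(n:ℝ)+1) ≤ (b-a)*x := by
    have : 2*(D+(n:ℝ)+1)/(b-a) ≤ x := le_trans (le_trans (le_max_right _ _) (le_max_left _ _)) hXx
    rw [div_le_iff₀ hba] at this; linarith
  have hx3 : 1 ≤ b*x := by
    have : 1/b ≤ x := le_trans (le_max_right _ _) hXx
    rw [div_le_iff₀ hb] at this; linarith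
  have haxD : 0 < a*x/D := by positivity
  set M : ℕ := ⌈a*x/D⌉₊ with hMdef
  set L : ℕ := ⌊(b-a)*x/(2*D)⌋₊ with hLdef
  have hM1 : a*x ≤ D*(M:ℝ) := by
    have hle := Nat.le_ceil (a*x/D)
    rw [← hMdef, div_le_iff₀ hDpos] at hle; linarith
  have hM2 : D*(M:ℝ) ≤ a*x + D := by
    have h2 := Nat.ceil_lt_add_one haxD.le
    rw [← hMdef] at h2
    have h3 : (M:ℝ)*D < (a*x/D+1)*D := mul_lt_mul_of_pos_right h2 hDpos
    rw [add_mul, div_mul_cancel₀ _ hDpos.ne', one_mul] at h3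
    linarith
  have hL1 : (b-a)*x ≤ 4*D*(L:ℝ) := by
    have h1 := Nat.lt_floor_add_one ((b-a)*x/(2*D))
    rw [← hLdef, div_lt_iff₀ (by positivity : (0:ℝ) < 2*D)] at h1
    linarith
  have hL2 : 2*D*(L:ℝ) ≤ (b-a)*x := by
    have hfl := Nat.floor_le (by positivity : (0:ℝ) ≤ (b-a)*x/(2*D))
    rw [← hLdef, le_div_iff₀ (by positivity : (0:ℝ) < 2*D)] at hfl
    linarith
  have hLpos : (1:ℝ) ≤ (L:ℝ) := by nlinarith [hDpos, hx1, hL1]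
  have hMpos : 1 ≤ M := Nat.ceil_pos.mpr haxD
  have key : D*((M:ℝ)+(L:ℝ)) + (n:ℝ) + 1 ≤ b*x := by nlinarith
  -- rewrite a/h², b/h²
  have hax : a / h^2 = a*x := by rw [hxdef]; ring
  have hbx : b / h^2 = b*x := by rw [hxdef]; ring
  rw [hax, hbx]
  clear_value X x M L
  set T : Finset (ℕ × ℕ) := (Finset.Ico M (M+L)).image (fun ℓ => (ℓ, 1)) with hTdef
  have hmem : ∀ ℓ ∈ Finset.Ico M (M+L), (M:ℝ) ≤ (ℓ:ℝ) ∧ (ℓ:ℝ) ≤ (M:ℝ)+(L:ℝ) := by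
    intro ℓ hℓ
    rw [Finset.mem_Ico] at hℓ
    constructor
    · exact_mod_cast hℓ.1
    · have : ℓ ≤ M + L := le_of_lt hℓ.2
      exact_mod_cast this
  -- lower bound each term
  set cst : ℝ := (n:ℝ)/(n.factorial:ℝ) * (a*x/D)^n with hcstdef
  have hcst0 : 0 ≤ cst := by positivity
  have hterm : ∀ ℓ ∈ Finset.Ico M (M+L), cst ≤ harmDim n ℓ 1 := by
    intro ℓ hℓ
    obtain ⟨hge, _⟩ := hmem ℓ hℓ
    have hℓ1 : 1 ≤ ℓ := by
      rw [Finset.mem_Ico] at hℓ; omega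
    have h1 : (a*x/D)^n ≤ (ℓ:ℝ)^n := by
      apply pow_le_pow_left₀ haxD.le
      calc a*x/D ≤ (M:ℝ) := by rw [div_le_iff₀ hDpos]; linarith
        _ ≤ (ℓ:ℝ) := hge
    calc cst ≤ (n:ℝ)/(n.factorial:ℝ) * (ℓ:ℝ)^n := by
          apply mul_le_mul_of_nonneg_left h1 (by positivity)
      _ ≤ harmDim n ℓ 1 := harmDim_one_lb n ℓ hn hℓ1
  have hcard : (Finset.Ico M (M+L)).card = L := by
    rw [Nat.card_Ico]; omega
  have hsum1 : (L:ℝ) * cst ≤ ∑ ℓ ∈ Finset.Ico M (M+L), harmDim n ℓ 1 := by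
    have := Finset.card_nsmul_le_sum (Finset.Ico M (M+L)) (fun ℓ => harmDim n ℓ 1) cst hterm
    rw [hcard] at this
    simpa [nsmul_eq_mul] using this
  have hsum2 : ∑ ℓ ∈ Finset.Ico M (M+L), harmDim n ℓ 1 = ∑ p ∈ T, harmDim n p.1 p.2 := by
    rw [hTdef, Finset.sum_image]
    intro x1 _ x2 _ hx12
    exact (Prod.mk.injEq _ _ _ _).mp hx12 |>.1
  have hpow : c / h ^ (2*n+2) = c * x^(n+1) := by
    rw [hxdef]
    have : h ^ (2*n+2) = (h^2)^(n+1) := by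
      rw [← pow_mul]; ring_nf
    rw [this, div_pow, one_pow]
    field_simp
  rw [hpow]
  refine le_trans ?_ (Finset.sum_le_sum_of_subset_of_nonneg (s := T) ?_
    (fun p _ _ => harmDim_nonneg n p.1 p.2))
  swap
  · intro p hp
    rw [hTdef, Finset.mem_image] at hp
    obtain ⟨ℓ, hℓ, rfl⟩ := hp
    obtain ⟨hge, hle⟩ := hmem ℓ hℓ
    have hD1 : (1:ℝ) ≤ D := by rw [hDdef]; push_cast; linarith
    have hp1 : D*(ℓ:ℝ) ≤ D*((M:ℝ)+(L:ℝ)) := mul_le_mul_of_nonneg_left hle hDpos.le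
    have hp2 : 1*(ℓ:ℝ) ≤ D*(ℓ:ℝ) := mul_le_mul_of_nonneg_right hD1 (Nat.cast_nonneg ℓ)
    have hp3 : D*(M:ℝ) ≤ D*(ℓ:ℝ) := mul_le_mul_of_nonneg_left hge hDpos.le
    have hℓub : (ℓ:ℝ) ≤ b*x := by linarith [key, hnR]
    have hℓfloor : ℓ < ⌊b*x⌋₊ + 1 := by
      have : ℓ ≤ ⌊b*x⌋₊ := Nat.le_floor hℓub
      omega
    have h1floor : 1 < ⌊b*x⌋₊ + 1 := by
      have : 1 ≤ ⌊b*x⌋₊ := Nat.le_floor (by exact_mod_cast hx3)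
      omega
    simp only [Finset.mem_filter, Finset.mem_product, Finset.mem_range]
    have hcast : ((2 * ℓ * 1 + n * (ℓ + 1) : ℕ) : ℝ) = D*(ℓ:ℝ) + (n:ℝ) := by
      push_cast; rw [hDdef]; ring
    refine ⟨⟨hℓfloor, h1floor⟩, ?_, ?_⟩
    · rw [hcast]; linarith [hM1, hnR]
    · rw [hcast]; linarith [key]
  have hfinal : c * x^(n+1) ≤ (L:ℝ) * cst := by
    have heq : c * x^(n+1) = ((b-a)*x/(4*D)) * cst := by
      rw [hcdef, hcstdef, mul_div_right_comm a x D, mul_pow,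
        mul_div_right_comm (b-a) x (4*D)]
      ring
    rw [heq]
    apply mul_le_mul_of_nonneg_right _ hcst0
    rw [div_le_iff₀ (by positivity : (0:ℝ) < 4*D)]
    linarith
  calc c * x^(n+1) ≤ (L:ℝ) * cst := hfinal
    _ ≤ ∑ ℓ ∈ Finset.Ico M (M+L), harmDim n ℓ 1 := hsum1
    _ = ∑ p ∈ T, harmDim n p.1 p.2 := hsum2
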